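/- arXiv:2510.19120 — 4 statements merged into one kernel-verified Lean document; each statement's English description precedes it below -/
import Mathlib

section
/- Let δ ∈ ℕ⁺ and ρ ∈ ℕ∪{0}. Let G be a finite simple graph and let (T,u) be a (δ·2^{ρ²},ρ)-regular rooted tree such that T is a subgraph of G. Then there is a (δ,ρ)-regular rooted subtree (T',u) of (T,u) that is path-uniform in G. -/
/-- The induced subgraph of `G` on `S` is nonempty and connected, expressed via
walks of `G` staying inside `S`. -/
def ConnectedIn {V : Type*} (G : SimpleGraph V) (S : Set V) : Prop :=
  S.Nonempty ∧ ∀ a ∈ S, ∀ b ∈ S, ∃ w : G.Walk a b, ∀ v ∈ w.support, v ∈ S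

/-- An induced `H`-model in `G`: pairwise disjoint nonempty connected branch sets,
joined by an edge iff the corresponding vertices of `H` are adjacent. -/
def IsInducedModel {W V : Type*} (H : SimpleGraph W) (G : SimpleGraph V) (X : W → Set V) : Prop :=
  (∀ w, ConnectedIn G (X w)) ∧
  (∀ w w', w ≠ w' → Disjoint (X w) (X w')) ∧
  (∀ w w', H.Adj w w' → ∃ a ∈ X w, ∃ b ∈ X w', G.Adj a b) ∧
  (∀ w w', w ≠ w' → ¬ H.Adj w w' → ∀ a ∈ X w, ∀ b ∈ X w', ¬ G.Adj a b)

/-- `G` has an induced minor isomorphic to `H`. -/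
def InducedMinor {W V : Type*} (H : SimpleGraph W) (G : SimpleGraph V) : Prop :=
  ∃ X : W → Set V, IsInducedModel H G X

/-- An `H`-model in `G` (for the minor relation). -/
def IsMinorModel {W V : Type*} (H : SimpleGraph W) (G : SimpleGraph V) (X : W → Set V) : Prop :=
  (∀ w, ConnectedIn G (X w)) ∧
  (∀ w w', w ≠ w' → Disjoint (X w) (X w')) ∧
  (∀ w w', H.Adj w w' → ∃ a ∈ X w, ∃ b ∈ X w', G.Adj a b)

/-- `G` has a minor isomorphic to `H`. -/
def HasMinor {W V : Type*} (H : SimpleGraph W) (G : SimpleGraph V) : Prop :=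
  ∃ X : W → Set V, IsMinorModel H G X

/-- `(T, β)` is a tree decomposition of `G`. -/
structure IsTreeDecomp {V ι : Type*} (G : SimpleGraph V) (T : SimpleGraph ι)
    (β : ι → Finset V) : Prop where
  tree : T.IsTree
  bags_connected : ∀ v : V, ConnectedIn T {i | v ∈ β i}
  edges_covered : ∀ u v : V, G.Adj u v → ∃ i, u ∈ β i ∧ v ∈ β i

/-- `G` has a tree decomposition of width at most `w`. -/
def TreewidthLE {V : Type*} (G : SimpleGraph V) (w : ℕ) : Prop :=
  ∃ (n : ℕ) (T : SimpleGraph (Fin n)) (β : Fin n → Finset V),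
    IsTreeDecomp G T β ∧ ∀ i, (β i).card ≤ w + 1

noncomputable def treewidth {V : Type*} (G : SimpleGraph V) : ℕ :=
  sInf {w | TreewidthLE G w}

/-- `G` has a path decomposition of width at most `w`. -/
def PathwidthLE {V : Type*} (G : SimpleGraph V) (w : ℕ) : Prop :=
  ∃ (n : ℕ) (β : Fin n → Finset V),
    IsTreeDecomp G (SimpleGraph.pathGraph n) β ∧ ∀ i, (β i).card ≤ w + 1

noncomputable def pathwidth {V : Type*} (G : SimpleGraph V) : ℕ :=
  sInf {w | PathwidthLE G w}

/-- A hereditary class of finite graphs (each finite graph is represented, up to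
isomorphism, on some `Fin n`): the class is closed under induced subgraphs,
i.e. under pulling back along injections. -/
def Hereditary (𝒢 : ∀ n : ℕ, SimpleGraph (Fin n) → Prop) : Prop :=
  ∀ (n m : ℕ) (G : SimpleGraph (Fin n)) (f : Fin m ↪ Fin n),
    𝒢 n G → 𝒢 m (G.comap ⇑f)

/-- A graph `J` is `ζ`-jagged if every induced subgraph with pathwidth at least 3
has at least `ζ` vertices of degree two (in that induced subgraph). -/
def Jagged {V : Type*} (ζ : ℕ) (J : SimpleGraph V) : Prop :=
  ∀ s : Set V, 3 ≤ pathwidth (J.induce s) →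
    ζ ≤ {v | v ∈ s ∧ ({w | w ∈ s ∧ J.Adj v w}).ncard = 2}.ncard

/-- A graph is `d`-degenerate if every nonempty induced subgraph has a vertex of
degree at most `d`. -/
def Degenerate {V : Type*} (d : ℕ) (G : SimpleGraph V) : Prop :=
  ∀ s : Set V, s.Nonempty → ∃ v ∈ s, ({w | w ∈ s ∧ G.Adj v w}).ncard ≤ d

/-- The complete binary tree of radius `ρ`: vertices are binary strings of length
at most `ρ`, and `x` is adjacent to `b :: x` (its children). -/
def binTree (ρ : ℕ) : SimpleGraph {l : List Bool // l.length ≤ ρ} where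
  Adj x y := (∃ b : Bool, (x : List Bool) = b :: (y : List Bool)) ∨
             (∃ b : Bool, (y : List Bool) = b :: (x : List Bool))
  symm := by constructor; rintro x y (h | h); exact Or.inr h; exact Or.inl h
  loopless := by
    constructor
    rintro x (⟨b, hb⟩ | ⟨b, hb⟩) <;>
      · have := congrArg List.length hb
        simp at this

/-- The `n × n` square grid graph. -/
def gridGraph (n : ℕ) : SimpleGraph (Fin n × Fin n) where
  Adj p q := (p.1 = q.1 ∧ ((p.2 : ℕ) + 1 = (q.2 : ℕ) ∨ (q.2 : ℕ) + 1 = (p.2 : ℕ))) ∨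
             (p.2 = q.2 ∧ ((p.1 : ℕ) + 1 = (q.1 : ℕ) ∨ (q.1 : ℕ) + 1 = (p.1 : ℕ)))
  symm := by
    constructor
    rintro p q (⟨h1, h2⟩ | ⟨h1, h2⟩)
    · exact Or.inl ⟨h1.symm, h2.symm⟩
    · exact Or.inr ⟨h1.symm, h2.symm⟩
  loopless := by constructor; rintro p (⟨_, h | h⟩ | ⟨_, h | h⟩) <;> omega

/-- A graph is planar iff it is isomorphic to a minor of some square grid. -/
def IsPlanar {W : Type*} (H : SimpleGraph W) : Prop :=
  ∃ n : ℕ, HasMinor H (gridGraph n)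

/-- `S` is the vertex set of an induced path in `G` from `x` to `y`. -/
def IsInducedPathSet {V : Type*} (G : SimpleGraph V) (S : Set V) (x y : V) : Prop :=
  ∃ p : G.Walk x y, p.IsPath ∧ {v | v ∈ p.support} = S ∧
    ∀ u v : V, u ∈ p.support → v ∈ p.support → G.Adj u v → p.toSubgraph.Adj u v

/-- `G` has a stable strong `(κ, lam)`-block: a stable set `B` of at least `κ`
vertices together with, for each unordered pair of distinct vertices of `B`,
at least `lam` pairwise internally disjoint induced paths joining them, such that
path systems of distinct pairs meet exactly in the shared endpoints. -/
def HasStableStrongBlock {V : Type*} (G : SimpleGraph V) (κ lam : ℕ) : Prop :=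
  ∃ (B : Set V) (P : V → V → Fin lam → Set V),
    κ ≤ B.ncard ∧
    (∀ x ∈ B, ∀ y ∈ B, x ≠ y → ¬ G.Adj x y) ∧
    (∀ x ∈ B, ∀ y ∈ B, x ≠ y →
      (∀ i, IsInducedPathSet G (P x y i) x y) ∧
      (∀ i j, i ≠ j → ∀ v, v ∈ P x y i → v ∈ P x y j → v = x ∨ v = y) ∧
      (∀ i, P x y i = P y x i)) ∧
    (∀ x ∈ B, ∀ y ∈ B, ∀ x' ∈ B, ∀ y' ∈ B, x ≠ y → x' ≠ y' →
      ({x, y} : Set V) ≠ {x', y'} →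
      (⋃ i, P x y i) ∩ (⋃ i, P x' y' i) = (({x, y} : Set V) ∩ {x', y'}))

/-- `G` is `(κ, lam)`-separable: there is no stable strong `(κ, lam)`-block in `G`. -/
def Separable {V : Type*} (G : SimpleGraph V) (κ lam : ℕ) : Prop :=
  ¬ HasStableStrongBlock G κ lam

/-- In the tree `T` rooted at `u`, `w` is a child of `v`. -/
def IsChild {α : Type*} (T : SimpleGraph α) (u v w : α) : Prop :=
  T.Adj v w ∧ T.dist u w = T.dist u v + 1

/-- `(T, u)` is a `(δ, ρ)`-regular rooted tree: `T` is a tree, every vertex is at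
distance at most `ρ` from `u`, and every vertex at distance less than `ρ` from `u`
has exactly `δ` children. -/
def RootedRegular {α : Type*} (T : SimpleGraph α) (u : α) (δ ρ : ℕ) : Prop :=
  T.IsTree ∧ (∀ v, T.dist u v ≤ ρ) ∧
    ∀ v, T.dist u v < ρ → {w | IsChild T u v w}.ncard = δ

/-- The rooted tree induced by `T` on `s`, with root `r`, is a rooted subtree of
`(T, u)`: it is a tree and every child relation in it is a child relation in `(T, u)`. -/
def IsRootedSubtree {α : Type*} (T : SimpleGraph α) (u : α) (s : Set α) (r : ↥s) : Prop :=
  (T.induce s).IsTree ∧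
    ∀ v w : ↥s, IsChild (T.induce s) r v w → IsChild T u (↑v) (↑w)

open Classical in
/-- The `i`-ancestor of `v` in the tree `T` rooted at `u`: the vertex on the unique
`u`–`v` path at distance `i` from `v`. -/
noncomputable def ancestor {α : Type*} (T : SimpleGraph α) (u v : α) (i : ℕ) : α :=
  if h : ∃ w, T.dist u w + i = T.dist u v ∧ T.dist w v = i then h.choose else v

/-- The rooted tree `T` (mapped into `G` by `f`) is path-uniform in `G`. -/
def PathUniform {V β : Type*} (G : SimpleGraph V) (f : β → V) (T : SimpleGraph β)
    (r : β) (ρ : ℕ) : Prop :=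
  ∀ v v' : β, T.dist r v = ρ → T.dist r v' = ρ → ∀ i j : ℕ, i ≤ ρ → j ≤ ρ →
    (G.Adj (f (ancestor T r v i)) (f (ancestor T r v j)) ↔
      G.Adj (f (ancestor T r v' i)) (f (ancestor T r v' j)))

/-- The rooted tree `T` (mapped into `G` by `f`) is path-induced in `G`. -/
def PathInduced {V β : Type*} (G : SimpleGraph V) (f : β → V) (T : SimpleGraph β)
    (r : β) (ρ : ℕ) : Prop :=
  ∀ v : β, T.dist r v = ρ → ∀ i j : ℕ, i ≤ ρ → j ≤ ρ →
    (G.Adj (f (ancestor T r v i)) (f (ancestor T r v j)) ↔ (i + 1 = j ∨ j + 1 = i))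

/-- The rooted tree `T` (mapped into `G` by `f`) is branch-induced in `G`: every
`G`-edge between vertices of `T` that is not a `T`-edge joins a vertex to one of
its ancestors. -/
def BranchInduced {V β : Type*} (G : SimpleGraph V) (f : β → V) (T : SimpleGraph β)
    (r : β) : Prop :=
  ∀ v w : β, G.Adj (f v) (f w) → ¬ T.Adj v w →
    (T.dist r v + T.dist v w = T.dist r w ∨ T.dist r w + T.dist w v = T.dist r v)

/-- `G` has a (not necessarily induced) subgraph isomorphic to `H`. -/
def HasSubgraphIso {W V : Type*} (H : SimpleGraph W) (G : SimpleGraph V) : Prop :=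
  ∃ f : W → V, Function.Injective f ∧ ∀ a b, H.Adj a b → G.Adj (f a) (f b)

/-- The spanning subgraph of `G` consisting of the edges of color `i` under the
edge-coloring `F`. -/
def colorSub {V : Type*} {c : ℕ} (G : SimpleGraph V) (F : V → V → Fin c) (i : Fin c) :
    SimpleGraph V where
  Adj u v := G.Adj u v ∧ F u v = i ∧ F v u = i
  symm := by constructor; rintro u v ⟨h1, h2, h3⟩; exact ⟨h1.symm, h3, h2⟩
  loopless := by constructor; rintro u ⟨h, _, _⟩; exact G.irrefl h

/-- Distance from `a` to `b` within the induced subgraph `G[S]` (via walks of `G`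
all of whose vertices lie in `S`). -/
noncomputable def distIn {V : Type*} (G : SimpleGraph V) (S : Set V) (a b : V) : ℕ :=
  sInf {n | ∃ w : G.Walk a b, w.length = n ∧ ∀ v ∈ w.support, v ∈ S}

/-- `(a 0, …, a (σ+1))` is a `(σ, θ)`-`X`-abyss in `G`. -/
def IsAbyss {V : Type*} (G : SimpleGraph V) (X : Set V) (σ θ : ℕ) (a : ℕ → V) : Prop :=
  ∃ (S : ℕ → Set V) (ρ : ℕ → ℕ),
    S 0 ⊆ X ∧ ConnectedIn G (S 0) ∧ (∀ k ≤ σ + 1, a k ∈ S 0) ∧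
    (∀ i < σ,
      S (i + 1) ⊆ {v | v ∈ S i ∧ distIn G (S i) (a i) v = ρ i + 1} ∧
      ConnectedIn G (S (i + 1)) ∧
      ∀ k, i + 1 ≤ k → k ≤ σ + 1 → a k ∈ S (i + 1)) ∧
    θ ≤ G.dist (a σ) (a (σ + 1))

/-- The torso of a tree decomposition `(T, β)` of `G` at the node `x`. -/
def torso {V ι : Type*} (G : SimpleGraph V) (T : SimpleGraph ι) (β : ι → Finset V)
    (x : ι) : SimpleGraph {v : V // v ∈ β x} where
  Adj u v := u ≠ v ∧ (G.Adj ↑u ↑v ∨ ∃ y, T.Adj x y ∧ ↑u ∈ β y ∧ ↑v ∈ β y)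
  symm := by
    constructor
    rintro u v ⟨hne, h | ⟨y, hy, h1, h2⟩⟩
    · exact ⟨hne.symm, Or.inl h.symm⟩
    · exact ⟨hne.symm, Or.inr ⟨y, hy, h2, h1⟩⟩
  loopless := by constructor; rintro u ⟨hne, _⟩; exact hne rfl

/-- The vertex set of the component of `T - x` containing `y` (denoted `T_{y∖x}`). -/
def compAway {ι : Type*} (T : SimpleGraph ι) (y x : ι) : Set ι :=
  {z | ∃ w : T.Walk y z, x ∉ w.support}

/-- A tree decomposition `(T, β)` of `G` is tight. -/
def Tight {V ι : Type*} (G : SimpleGraph V) (T : SimpleGraph ι) (β : ι → Finset V) : Prop :=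
  ∀ x y, T.Adj x y →
    ∃ v₀ ∈ (⋃ z ∈ compAway T y x, (β z : Set V)) \ (⋃ z ∈ compAway T x y, (β z : Set V)),
      ∀ u : V, u ∈ β x → u ∈ β y →
        ∃ c : V, G.Adj u c ∧ ∃ w : G.Walk v₀ c, ∀ p ∈ w.support,
          p ∈ (⋃ z ∈ compAway T y x, (β z : Set V)) \ (⋃ z ∈ compAway T x y, (β z : Set V))

/-- `G` has a subgraph isomorphic to some subdivision of the complete graph `K_μ`:
equivalently, there are `μ` branch vertices joined by pairwise internally disjoint
paths of nonzero length. -/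
def HasKSubdivision {V : Type*} (μ : ℕ) (G : SimpleGraph V) : Prop :=
  ∃ b : Fin μ → V, Function.Injective b ∧
    ∃ P : ∀ i j : Fin μ, i < j → G.Walk (b i) (b j),
      (∀ i j (h : i < j), (P i j h).IsPath) ∧
      (∀ i j (h : i < j), ∀ m : Fin μ, b m ∈ (P i j h).support → m = i ∨ m = j) ∧
      (∀ i j (h : i < j), ∀ k l (h' : k < l), (i, j) ≠ (k, l) →
        ∀ v : V, v ∈ (P i j h).support → v ∈ (P k l h').support →
          (v = b i ∨ v = b j) ∧ (v = b k ∨ v = b l))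


/-! The subtree is built bottom-up. Each leaf `x` carries the adjacency pattern in `G` of its
ancestors `x = a₀, a₁, …, a_ρ`, which is determined by `ρ²` bits. Call a subtree hanging from `v`
uniform if it is regular of degree `δ` and all its leaves carry the same pattern. A vertex of
depth `< ρ` has `δ · 2^{ρ²}` children, each the top of a uniform subtree by induction; by
pigeonhole `δ` of them share their pattern, and together with `v` they form a uniform subtree
hanging from `v`. At the root this is the required path-uniform subtree: since `T` is a tree, a
subtree closed under ancestors induces the same distances, children and ancestors as `T`. -/

namespace SimpleGraph

variable {V : Type*} {G : SimpleGraph V} {u v w x a b : V}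

lemma Connected.dist_add_dist_trans (hG : G.Connected)
    (h₁ : G.dist u v + G.dist v w = G.dist u w) (h₂ : G.dist u w + G.dist w x = G.dist u x) :
    G.dist u v + G.dist v x = G.dist u x := by
  have := hG.dist_triangle (u := v) (v := w) (w := x)
  have := hG.dist_triangle (u := u) (v := v) (w := x)
  omega

lemma Connected.exists_dist_add_eq (hG : G.Connected) {i : ℕ} (hi : i ≤ G.dist u v) :
    ∃ w, G.dist u w + i = G.dist u v ∧ G.dist w v = i := by
  obtain ⟨p, hp⟩ := hG.exists_walk_length_eq_dist u v
  refine ⟨p.getVert (G.dist u v - i), ?_⟩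
  have h₁ := dist_le (p.take (G.dist u v - i))
  have h₂ := dist_le (p.drop (G.dist u v - i))
  have := hG.dist_triangle (u := u) (v := p.getVert (G.dist u v - i)) (w := v)
  rw [Walk.take_length] at h₁
  rw [Walk.drop_length] at h₂
  omega

lemma IsTree.eq_of_dist_add_eq (hG : G.IsTree)
    (ha : G.dist u a + G.dist a v = G.dist u v) (hb : G.dist u b + G.dist b v = G.dist u v)
    (hab : G.dist u a = G.dist u b) : a = b := by
  obtain ⟨p, hp⟩ := hG.1.exists_walk_length_eq_dist u a
  obtain ⟨q, hq⟩ := hG.1.exists_walk_length_eq_dist a v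
  obtain ⟨p', hp'⟩ := hG.1.exists_walk_length_eq_dist u b
  obtain ⟨q', hq'⟩ := hG.1.exists_walk_length_eq_dist b v
  have hpq : (p.append q).IsPath := Walk.isPath_of_length_eq_dist _ (by simp; omega)
  have hpq' : (p'.append q').IsPath := Walk.isPath_of_length_eq_dist _ (by simp; omega)
  have heq : p.append q = p'.append q' :=
    congrArg Subtype.val ((hG.2.subsingleton_path u v).elim ⟨_, hpq⟩ ⟨_, hpq'⟩)
  have ha' : (p.append q).getVert (G.dist u a) = a := by
    rw [← hp, Walk.getVert_append', if_pos le_rfl, Walk.getVert_length]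
  have hb' : (p'.append q').getVert (G.dist u a) = b := by
    rw [hab, ← hp', Walk.getVert_append', if_pos le_rfl, Walk.getVert_length]
  rw [← ha', ← hb', heq]

lemma IsAcyclic.dist_induce (hG : G.IsAcyclic) {s : Set V} (hs : (G.induce s).Connected)
    (a b : s) : (G.induce s).dist a b = G.dist a b := by
  obtain ⟨q, hq, hqlen⟩ := hs.exists_path_of_dist a b
  let f := (Embedding.induce (G := G) s).toHom
  have hfq : (q.map f).IsPath := (Walk.isPath_map_iff_of_injective Subtype.val_injective).2 hq
  obtain ⟨p, hp, hplen⟩ := (q.map f).reachable.exists_path_of_dist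
  have := congrArg (·.1.length) ((hG.subsingleton_path _ _).elim ⟨p, hp⟩ ⟨_, hfq⟩)
  simp only [Walk.length_map] at this
  rw [← hqlen, ← this]
  exact hplen

end SimpleGraph

open SimpleGraph

section Ancestor

variable {α : Type*} {T : SimpleGraph α} {u v w : α} {i : ℕ}

lemma ancestor_eq_of_dist (hT : T.IsTree) (h₁ : T.dist u w + i = T.dist u v)
    (h₂ : T.dist w v = i) : ancestor T u v i = w := by
  have hex : ∃ w, T.dist u w + i = T.dist u v ∧ T.dist w v = i := ⟨w, h₁, h₂⟩
  rw [ancestor, dif_pos hex]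
  obtain ⟨h₃, h₄⟩ := hex.choose_spec
  exact hT.eq_of_dist_add_eq (u := u) (v := v) (by omega) (by omega) (by omega)

lemma ancestor_zero (hT : T.IsTree) : ancestor T u v 0 = v :=
  ancestor_eq_of_dist hT rfl SimpleGraph.dist_self

lemma dist_ancestor (hT : T.Connected) (hi : i ≤ T.dist u v) :
    T.dist u (ancestor T u v i) + i = T.dist u v ∧ T.dist (ancestor T u v i) v = i := by
  have hex := hT.exists_dist_add_eq hi
  rw [ancestor, dif_pos hex]
  exact hex.choose_spec

lemma ancestor_induce (hT : T.IsTree) {s : Set α} (hs : (T.induce s).Connected) {r v : s}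
    (hi : i ≤ T.dist r v) (hmem : ancestor T r v i ∈ s) :
    (↑(ancestor (T.induce s) r v i) : α) = ancestor T r v i := by
  obtain ⟨h₁, h₂⟩ := dist_ancestor hT.1 hi
  have hind : (T.induce s).IsTree := ⟨hs, hT.2.induce s⟩
  rw [ancestor_eq_of_dist (w := ⟨_, hmem⟩) hind] <;> simpa [hT.2.dist_induce hs]

lemma IsChild.dist_add_dist (h : IsChild T u v w) : T.dist u v + T.dist v w = T.dist u w := by
  rw [dist_eq_one_iff_adj.2 h.1, h.2]

end Ancestor

lemma Set.Finite.exists_subset_card_eq_of_card_mul_le_ncard {ι β : Type*} [Fintype β]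
    [Nonempty β] {s : Set ι} (hs : s.Finite) (f : ι → β) {n : ℕ}
    (hn : Fintype.card β * n ≤ s.ncard) :
    ∃ (t : Finset ι) (b : β), ↑t ⊆ s ∧ t.card = n ∧ ∀ x ∈ t, f x = b := by
  classical
  obtain ⟨b, -, hb⟩ := Finset.exists_le_card_fiber_of_mul_le_card_of_maps_to
    (s := hs.toFinset) (f := f) (fun _ _ => Finset.mem_univ _) Finset.univ_nonempty
    (by rwa [Finset.card_univ, ← Set.ncard_eq_toFinset_card s hs])
  obtain ⟨t, hts, rfl⟩ := Finset.exists_subset_card_eq hb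
  have hmem : ∀ x ∈ t, x ∈ s ∧ f x = b := fun x hx => by simpa using hts hx
  exact ⟨t, b, fun x hx => (hmem x hx).1, rfl, fun x hx => (hmem x hx).2⟩

section Pattern

variable {α : Type*} {G T : SimpleGraph α} {u x y : α} {ρ i j : ℕ}

/-- Only the `ρ²` pairs of ancestors `(i, j + 1)` with `i, j < ρ` are recorded: they include every
pair `i < j`, and the other pairs follow by symmetry and irreflexivity of `G.Adj`. -/
def ancestorPattern (G T : SimpleGraph α) (u : α) (ρ : ℕ) (x : α) : Fin ρ × Fin ρ → Prop :=
  fun ij => G.Adj (ancestor T u x ij.1) (ancestor T u x (ij.2 + 1))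

lemma adj_ancestor_iff_of_ancestorPattern_eq
    (h : ancestorPattern G T u ρ x = ancestorPattern G T u ρ y) (hi : i ≤ ρ) (hj : j ≤ ρ) :
    G.Adj (ancestor T u x i) (ancestor T u x j) ↔ G.Adj (ancestor T u y i) (ancestor T u y j) := by
  have of_lt : ∀ i j, i < j → j ≤ ρ → (G.Adj (ancestor T u x i) (ancestor T u x j) ↔
      G.Adj (ancestor T u y i) (ancestor T u y j)) := by
    intro i j hij hj
    obtain ⟨k, rfl⟩ : ∃ k, j = k + 1 := ⟨j - 1, by omega⟩
    exact Iff.of_eq (congrFun h (⟨i, by omega⟩, ⟨k, by omega⟩))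
  rcases lt_trichotomy i j with hij | rfl | hij
  · exact of_lt i j hij hj
  · simp
  · rw [G.adj_comm, G.adj_comm (ancestor T u y i)]
    exact of_lt j i hij hi

end Pattern

/-- `S` spans a `(δ, ρ - d)`-regular rooted subtree of `(T, u)` hanging from the vertex `v` of
depth `d`, all of whose leaves have ancestor pattern `p`. -/
structure IsUniformBranch {α : Type*} (G T : SimpleGraph α) (u : α) (δ ρ : ℕ) (v : α)
    (S : Set α) (p : Fin ρ × Fin ρ → Prop) : Prop where
  self_mem : v ∈ S
  dist_add_dist : ∀ x ∈ S, T.dist u v + T.dist v x = T.dist u x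
  ancestor_mem : ∀ x ∈ S, ∀ i ≤ T.dist v x, ancestor T u x i ∈ S
  ncard_children : ∀ x ∈ S, T.dist u x < ρ → {w | w ∈ S ∧ IsChild T u x w}.ncard = δ
  ancestorPattern_eq : ∀ x ∈ S, T.dist u x = ρ → ancestorPattern G T u ρ x = p

namespace IsUniformBranch

variable {α : Type*} {G T : SimpleGraph α} {u v : α} {δ ρ : ℕ} {p : Fin ρ × Fin ρ → Prop}
  {s : Set α} {D : Finset α} {S : α → Set α}

lemma singleton (hT : T.IsTree) (hv : T.dist u v = ρ) :
    IsUniformBranch G T u δ ρ v {v} (ancestorPattern G T u ρ v) where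
  self_mem := rfl
  dist_add_dist := by rintro x rfl; simp
  ancestor_mem := by
    rintro x rfl i hi
    rw [SimpleGraph.dist_self, Nat.le_zero] at hi
    rw [hi, ancestor_zero hT]
    rfl
  ncard_children := by rintro x rfl; omega
  ancestorPattern_eq := by rintro x rfl -; rfl

lemma mem_of_dist_add_dist (hT : T.IsTree) (hD : ∀ c ∈ D, IsChild T u v c)
    (hS : ∀ c ∈ D, IsUniformBranch G T u δ ρ c (S c) p) {c w : α} (hc : c ∈ D)
    (hw : w ∈ insert v (⋃ c ∈ D, S c)) (hcw : T.dist u c + T.dist c w = T.dist u w) :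
    w ∈ S c := by
  obtain rfl | hw := hw
  · have := (hD c hc).2
    omega
  · obtain ⟨c', hc', hw⟩ := Set.mem_iUnion₂.1 hw
    obtain rfl : c = c' := hT.eq_of_dist_add_eq hcw ((hS c' hc').dist_add_dist w hw)
      (by rw [(hD c hc).2, (hD c' hc').2])
    exact hw

lemma ncard_children_insert_biUnion (hT : T.IsTree) (hD : ∀ c ∈ D, IsChild T u v c)
    (hS : ∀ c ∈ D, IsUniformBranch G T u δ ρ c (S c) p) (hcard : D.card = δ) {x : α}
    (hx : x ∈ insert v (⋃ c ∈ D, S c)) (hxρ : T.dist u x < ρ) :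
    {w | w ∈ insert v (⋃ c ∈ D, S c) ∧ IsChild T u x w}.ncard = δ := by
  have hmem : ∀ c ∈ D, S c ⊆ insert v (⋃ c ∈ D, S c) := fun c hc x hx =>
    Set.mem_insert_of_mem _ (Set.mem_iUnion₂.2 ⟨c, hc, hx⟩)
  obtain rfl | hx := hx
  · suffices {w | w ∈ insert x (⋃ c ∈ D, S c) ∧ IsChild T u x w} = D by
      rw [this, Set.ncard_coe_finset, hcard]
    ext w
    refine ⟨fun ⟨hw, hxw⟩ => ?_, fun hw => ⟨hmem w hw (hS w hw).self_mem, hD w hw⟩⟩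
    obtain rfl | hw := hw
    · have := hxw.2
      omega
    · obtain ⟨c, hc, hw⟩ := Set.mem_iUnion₂.1 hw
      obtain rfl : c = w := hT.eq_of_dist_add_eq ((hS c hc).dist_add_dist w hw)
        (by simp) (by rw [(hD c hc).2, hxw.2])
      exact hc
  · obtain ⟨c, hc, hx⟩ := Set.mem_iUnion₂.1 hx
    rw [← (hS c hc).ncard_children x hx hxρ]
    congr 1
    ext w
    refine ⟨fun ⟨hw, hxw⟩ => ⟨mem_of_dist_add_dist hT hD hS hc hw ?_, hxw⟩,
      fun ⟨hw, hxw⟩ => ⟨hmem c hc hw, hxw⟩⟩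
    exact hT.1.dist_add_dist_trans ((hS c hc).dist_add_dist x hx) hxw.dist_add_dist

lemma insert_biUnion (hT : T.IsTree) (hD : ∀ c ∈ D, IsChild T u v c)
    (hS : ∀ c ∈ D, IsUniformBranch G T u δ ρ c (S c) p) (hcard : D.card = δ)
    (hv : T.dist u v < ρ) :
    IsUniformBranch G T u δ ρ v (insert v (⋃ c ∈ D, S c)) p := by
  have hdist : ∀ c ∈ D, ∀ x ∈ S c, T.dist u v + T.dist v x = T.dist u x := fun c hc x hx =>
    hT.1.dist_add_dist_trans (hD c hc).dist_add_dist ((hS c hc).dist_add_dist x hx)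
  refine ⟨Set.mem_insert _ _, ?_, ?_,
    fun x hx => ncard_children_insert_biUnion hT hD hS hcard hx, ?_⟩
  · rintro x (rfl | hx)
    · simp
    · obtain ⟨c, hc, hx⟩ := Set.mem_iUnion₂.1 hx
      exact hdist c hc x hx
  · rintro x (rfl | hx) i hi
    · rw [SimpleGraph.dist_self, Nat.le_zero] at hi
      rw [hi, ancestor_zero hT]
      exact Set.mem_insert _ _
    · obtain ⟨c, hc, hx⟩ := Set.mem_iUnion₂.1 hx
      have h₁ := hdist c hc x hx
      have h₂ := (hS c hc).dist_add_dist x hx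
      have h₃ := (hD c hc).2
      by_cases hi' : i ≤ T.dist c x
      · exact Set.mem_insert_of_mem _
          (Set.mem_iUnion₂.2 ⟨c, hc, (hS c hc).ancestor_mem x hx i hi'⟩)
      · rw [ancestor_eq_of_dist hT (w := v) (by omega) (by omega)]
        exact Set.mem_insert _ _
  · rintro x (rfl | hx) hxρ
    · omega
    · obtain ⟨c, hc, hx⟩ := Set.mem_iUnion₂.1 hx
      exact (hS c hc).ancestorPattern_eq x hx hxρ


lemma induce_connected (hT : T.Connected) (hs : IsUniformBranch G T u δ ρ u s p) :
    (T.induce s).Connected := by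
  rw [connected_iff_exists_forall_reachable]
  refine ⟨⟨u, hs.self_mem⟩, fun ⟨x, hx⟩ => ?_⟩
  induction hn : T.dist u x generalizing x with
  | zero =>
    obtain rfl := (hT.dist_eq_zero_iff.1 hn).symm
    rfl
  | succ n ih =>
    obtain ⟨h₁, h₂⟩ := dist_ancestor hT (u := u) (v := x) (i := 1) (by omega)
    have hy := hs.ancestor_mem x hx 1 (by omega)
    have hadj : (T.induce s).Adj ⟨_, hy⟩ ⟨x, hx⟩ := (dist_eq_one_iff_adj (G := T)).1 h₂
    exact (ih _ hy (by omega)).trans hadj.reachable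

lemma dist_induce (hT : T.IsTree) (hs : IsUniformBranch G T u δ ρ u s p) (x y : s) :
    (T.induce s).dist x y = T.dist x y :=
  hT.2.dist_induce (hs.induce_connected hT.1) x y

lemma isTree_induce (hT : T.IsTree) (hs : IsUniformBranch G T u δ ρ u s p) :
    (T.induce s).IsTree :=
  ⟨hs.induce_connected hT.1, hT.2.induce s⟩

lemma isChild_induce_iff (hT : T.IsTree) (hs : IsUniformBranch G T u δ ρ u s p) {x w : s} :
    IsChild (T.induce s) ⟨u, hs.self_mem⟩ x w ↔ IsChild T u x w := by
  simp only [IsChild, hs.dist_induce hT]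
  rfl

lemma isRootedSubtree (hT : T.IsTree) (hs : IsUniformBranch G T u δ ρ u s p) :
    IsRootedSubtree T u s ⟨u, hs.self_mem⟩ :=
  ⟨hs.isTree_induce hT, fun _ _ h => (hs.isChild_induce_iff hT).1 h⟩

lemma rootedRegular (hT : T.IsTree) (hs : IsUniformBranch G T u δ ρ u s p)
    (hρ : ∀ x, T.dist u x ≤ ρ) : RootedRegular (T.induce s) ⟨u, hs.self_mem⟩ δ ρ := by
  refine ⟨hs.isTree_induce hT, fun x => hs.dist_induce hT _ x ▸ hρ x, fun x hx => ?_⟩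
  rw [hs.dist_induce hT] at hx
  refine Eq.trans ?_ (hs.ncard_children x x.2 hx)
  rw [← Set.ncard_image_of_injective _ Subtype.val_injective]
  congr 1
  ext w
  simp [hs.isChild_induce_iff hT, and_comm]

lemma pathUniform (hT : T.IsTree) (hs : IsUniformBranch G T u δ ρ u s p) :
    PathUniform G (fun v : s => (v : α)) (T.induce s) ⟨u, hs.self_mem⟩ ρ := by
  intro v v' hv hv' i j hi hj
  rw [hs.dist_induce hT] at hv hv'
  have hanc : ∀ x : s, T.dist u x = ρ → ∀ k ≤ ρ,
      (↑(ancestor (T.induce s) ⟨u, hs.self_mem⟩ x k) : α) = ancestor T u x k :=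
    fun x hx k hk => ancestor_induce hT (hs.induce_connected hT.1) (by simp only; omega)
      (hs.ancestor_mem x x.2 k (by omega))
  simp only [hanc v hv _ hi, hanc v hv _ hj, hanc v' hv' _ hi, hanc v' hv' _ hj]
  exact adj_ancestor_iff_of_ancestorPattern_eq
    ((hs.ancestorPattern_eq v v.2 hv).trans (hs.ancestorPattern_eq v' v'.2 hv').symm) hi hj

end IsUniformBranch

theorem exists_isUniformBranch {α : Type*} [Finite α] {G T : SimpleGraph α} {u v : α}
    {δ ρ : ℕ} (hreg : RootedRegular T u (δ * 2 ^ ρ ^ 2) ρ) (hv : T.dist u v ≤ ρ) :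
    ∃ S p, IsUniformBranch G T u δ ρ v S p := by
  induction hn : ρ - T.dist u v generalizing v with
  | zero => exact ⟨_, _, IsUniformBranch.singleton hreg.1 (by omega)⟩
  | succ n ih =>
    have hvρ : T.dist u v < ρ := by omega
    choose! S p hS using fun c (hc : IsChild T u v c) =>
      ih (v := c) (by have := hc.2; omega) (by have := hc.2; omega)
    obtain ⟨D, q, hDC, hcard, hDq⟩ :=
      (Set.toFinite {c | IsChild T u v c}).exists_subset_card_eq_of_card_mul_le_ncard p (n := δ)
        (by simp [hreg.2.2 v hvρ, sq, mul_comm])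
    exact ⟨_, q, IsUniformBranch.insert_biUnion hreg.1 (fun c hc => hDC hc)
      (fun c hc => hDq c hc ▸ hS c (hDC hc)) hcard hvρ⟩

theorem statement8_general {α : Type} [Fintype α] (δ ρ : ℕ)
    (G T : SimpleGraph α) (u : α)
    (hreg : RootedRegular T u (δ * 2 ^ (ρ ^ 2)) ρ) :
    ∃ (s : Set α) (hu : u ∈ s),
      IsRootedSubtree T u s ⟨u, hu⟩ ∧
      RootedRegular (T.induce s) ⟨u, hu⟩ δ ρ ∧
      PathUniform G (fun v : ↥s => (v : α)) (T.induce s) ⟨u, hu⟩ ρ := by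
  obtain ⟨s, p, hs⟩ := exists_isUniformBranch (G := G) hreg (hreg.2.1 u)
  exact ⟨s, hs.self_mem, hs.isRootedSubtree hreg.1, hs.rootedRegular hreg.1 hreg.2.1,
    hs.pathUniform hreg.1⟩

/-- Every `(δ·2^{ρ²}, ρ)`-regular rooted tree that is a subgraph of `G` has a
`(δ, ρ)`-regular rooted subtree (with the same root) that is path-uniform in `G`. -/
theorem statement8 {α : Type} [Fintype α] (δ ρ : ℕ) (hδ : 1 ≤ δ)
    (G T : SimpleGraph α) (u : α) (hsub : T ≤ G)
    (hreg : RootedRegular T u (δ * 2 ^ (ρ ^ 2)) ρ) :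
    ∃ (s : Set α) (hu : u ∈ s),
      IsRootedSubtree T u s ⟨u, hu⟩ ∧
      RootedRegular (T.induce s) ⟨u, hu⟩ δ ρ ∧
      PathUniform G (fun v : ↥s => (v : α)) (T.induce s) ⟨u, hu⟩ ρ :=
  statement8_general δ ρ G T u hreg
end

section
/- Let σ ∈ ℕ⁺, let G be a graph with no induced minor isomorphic to K_{σ,σ}, and let X ⊆ V(G). Then there is no (σ,4σ)-X-abyss in G. -/
/-! Each of the `σ` nested levels of the abyss contributes a ball around `a i` of radius `ρ i`
in `G[S i]`; every deeper level lies on the sphere of radius `ρ i + 1` around `a i`, so these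
balls are pairwise disjoint and anticomplete. A walk from `a σ` to `a (σ + 1)` inside the last
level passes through vertices `b k` at distance `4 k + 2` from `a σ`. Each `b k` lies on every
sphere, so it is joined to the `i`-th ball through the last vertex `z i k` before it on a
shortest walk in `G[S i]`; the stars `{b k} ∪ {z i k | i < σ}` stay within distance one of
`b k` and are therefore pairwise anticomplete as well. The balls and the stars form an
induced `K_{σ,σ}`-model. -/

open SimpleGraph

variable {V : Type*} {G : SimpleGraph V}

lemma SimpleGraph.Adj.dist_le_dist_add_one {u v : V} (h : G.Adj u v) (x : V) :
    G.dist x v ≤ G.dist x u + 1 := by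
  rcases h.diff_dist_adj (u := x) with h | h | h <;> omega

lemma SimpleGraph.Walk.exists_mem_support_dist_eq {u v : V} (w : G.Walk u v) (x : V) {m : ℕ}
    (hu : G.dist x u ≤ m) (hv : m ≤ G.dist x v) : ∃ z ∈ w.support, G.dist x z = m := by
  induction w with
  | nil => exact ⟨_, Walk.start_mem_support _, le_antisymm hu hv⟩
  | @cons u u' v h p ih =>
    by_cases hm : G.dist x u = m
    · exact ⟨u, Walk.start_mem_support _, hm⟩
    · have := h.dist_le_dist_add_one x
      obtain ⟨z, hz, hzm⟩ := ih (by omega) hv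
      exact ⟨z, by simp [hz], hzm⟩

def Apart (G : SimpleGraph V) (P Q : Set V) : Prop :=
  ∀ p ∈ P, ∀ q ∈ Q, p ≠ q ∧ ¬ G.Adj p q

lemma Apart.symm {P Q : Set V} (h : Apart G P Q) : Apart G Q P :=
  fun q hq p hp => ⟨(h p hp q hq).1.symm, fun hqp => (h p hp q hq).2 hqp.symm⟩

instance : Std.Symm (Apart G) := ⟨fun _ _ => Apart.symm⟩

lemma Apart.disjoint {P Q : Set V} (h : Apart G P Q) : Disjoint P Q :=
  Set.disjoint_left.2 fun p hp hq => (h p hp p hq).1 rfl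

lemma Apart.mono_right {P Q Q' : Set V} (h : Apart G P Q) (hQ : Q' ⊆ Q) : Apart G P Q' :=
  fun p hp q hq => h p hp q (hQ hq)

lemma apart_of_dist_le_of_le_dist {P Q : Set V} (x : V) {m : ℕ}
    (hP : ∀ p ∈ P, G.dist x p ≤ m) (hQ : ∀ q ∈ Q, m + 2 ≤ G.dist x q) : Apart G P Q := by
  intro p hp q hq
  have hp' := hP p hp
  have hq' := hQ q hq
  refine ⟨by rintro rfl; omega, fun hpq => ?_⟩
  have := hpq.dist_le_dist_add_one x
  omega

lemma connectedIn_of_forall_walk {S : Set V} {c : V} (hc : c ∈ S)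
    (h : ∀ t ∈ S, ∃ w : G.Walk c t, ∀ v ∈ w.support, v ∈ S) : ConnectedIn G S := by
  refine ⟨⟨c, hc⟩, fun p hp q hq => ?_⟩
  obtain ⟨wp, hwp⟩ := h p hp
  obtain ⟨wq, hwq⟩ := h q hq
  refine ⟨wp.reverse.append wq, fun v hv => ?_⟩
  rw [Walk.mem_support_append_iff, Walk.support_reverse, List.mem_reverse] at hv
  exact hv.elim (hwp v) (hwq v)

lemma connectedIn_insert_of_forall_adj {T : Set V} {c : V} (h : ∀ t ∈ T, G.Adj c t) :
    ConnectedIn G (insert c T) := by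
  refine connectedIn_of_forall_walk (Set.mem_insert c T) fun t ht => ?_
  rcases ht with rfl | ht
  · exact ⟨.nil, by simp⟩
  · exact ⟨.cons (h t ht) .nil, by simp [ht]⟩

lemma dist_le_add_one_of_mem_insert (x : V) {T : Set V} {c v : V} (h : ∀ t ∈ T, G.Adj c t)
    (hv : v ∈ insert c T) : G.dist x v ≤ G.dist x c + 1 ∧ G.dist x c ≤ G.dist x v + 1 := by
  rcases hv with rfl | hv
  · omega
  · exact ⟨(h v hv).dist_le_dist_add_one x, (h v hv).symm.dist_le_dist_add_one x⟩

lemma apart_insert_insert_of_dist {T U : Set V} {x c d : V} (hT : ∀ t ∈ T, G.Adj c t)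
    (hU : ∀ t ∈ U, G.Adj d t) (hcd : G.dist x c + 4 ≤ G.dist x d) :
    Apart G (insert c T) (insert d U) :=
  apart_of_dist_le_of_le_dist x (m := G.dist x c + 1)
    (fun _ hp => (dist_le_add_one_of_mem_insert x hT hp).1)
    (fun _ hq => by have := (dist_le_add_one_of_mem_insert x hU hq).2; omega)

theorem inducedMinor_completeBipartiteGraph_of_apart {α β : Type*} (A : α → Set V) (B : β → Set V)
    (hA : ∀ i, ConnectedIn G (A i)) (hB : ∀ k, ConnectedIn G (B k))
    (hAA : Pairwise fun i j => Apart G (A i) (A j))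
    (hBB : Pairwise fun k l => Apart G (B k) (B l))
    (hAB : ∀ i k, Disjoint (A i) (B k)) (hedge : ∀ i k, ∃ p ∈ A i, ∃ q ∈ B k, G.Adj p q) :
    InducedMinor (completeBipartiteGraph α β) G := by
  refine ⟨Sum.elim A B, ?_, ?_, ?_, ?_⟩
  · rintro (i | k)
    exacts [hA i, hB k]
  · rintro (i | i) (j | j) hne
    · exact (hAA fun h => hne (congrArg _ h)).disjoint
    · exact hAB i j
    · exact (hAB j i).symm
    · exact (hBB fun h => hne (congrArg _ h)).disjoint
  · rintro (i | i) (j | j) hadj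
    · simp [completeBipartiteGraph] at hadj
    · exact hedge i j
    · obtain ⟨p, hp, q, hq, hpq⟩ := hedge j i
      exact ⟨q, hq, p, hp, hpq.symm⟩
    · simp [completeBipartiteGraph] at hadj
  · rintro (i | i) (j | j) hne hnadj p hp q hq
    · exact (hAA (fun h => hne (congrArg _ h)) p hp q hq).2
    · exact absurd (by simp [completeBipartiteGraph]) hnadj
    · exact absurd (by simp [completeBipartiteGraph]) hnadj
    · exact (hBB (fun h => hne (congrArg _ h)) p hp q hq).2

section distIn

variable {S : Set V} {a u v : V}

lemma distIn_le_length (w : G.Walk a v) (hw : ∀ q ∈ w.support, q ∈ S) :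
    distIn G S a v ≤ w.length :=
  Nat.sInf_le ⟨w, rfl, hw⟩

lemma exists_walk_length_eq_distIn (h : distIn G S a v ≠ 0) :
    ∃ w : G.Walk a v, w.length = distIn G S a v ∧ ∀ q ∈ w.support, q ∈ S :=
  Nat.sInf_mem (Nat.nonempty_of_pos_sInf (Nat.pos_of_ne_zero h))

lemma dist_le_distIn_add_distIn (hu : distIn G S a u ≠ 0) (hv : distIn G S a v ≠ 0) :
    G.dist u v ≤ distIn G S a u + distIn G S a v := by
  obtain ⟨wu, hwu, -⟩ := exists_walk_length_eq_distIn hu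
  obtain ⟨wv, hwv, -⟩ := exists_walk_length_eq_distIn hv
  calc G.dist u v ≤ (wu.reverse.append wv).length := dist_le _
    _ = distIn G S a u + distIn G S a v := by simp [hwu, hwv]

def ballIn (G : SimpleGraph V) (S : Set V) (a : V) (r : ℕ) : Set V :=
  {v | ∃ w : G.Walk a v, w.length < r ∧ ∀ q ∈ w.support, q ∈ S}

variable {r : ℕ}

lemma ballIn_subset : ballIn G S a r ⊆ S :=
  fun v ⟨w, _, hw⟩ => hw v w.end_mem_support

lemma distIn_lt_of_mem_ballIn (hv : v ∈ ballIn G S a r) : distIn G S a v < r :=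
  let ⟨w, hwr, hw⟩ := hv
  (distIn_le_length w hw).trans_lt hwr

lemma connectedIn_ballIn (ha : a ∈ S) (hr : 0 < r) : ConnectedIn G (ballIn G S a r) := by
  classical
  exact connectedIn_of_forall_walk ⟨.nil, hr, by simpa⟩ fun _ ⟨w, hwr, hw⟩ =>
    ⟨w, fun v hv => ⟨w.takeUntil v hv, (w.length_takeUntil_le_length hv).trans_lt hwr,
      fun q hq => hw q (w.support_takeUntil_subset_support hv hq)⟩⟩

lemma apart_ballIn {Q : Set V} (hQ : ∀ q ∈ Q, q ∈ S ∧ r < distIn G S a q) :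
    Apart G (ballIn G S a r) Q := by
  rintro p ⟨w, hwr, hw⟩ q hq
  obtain ⟨hqS, hqr⟩ := hQ q hq
  refine ⟨by rintro rfl; exact (distIn_le_length w hw).not_gt (hwr.trans hqr), fun hpq => ?_⟩
  have := distIn_le_length (w.concat hpq) fun t ht => by
    rw [Walk.support_concat, List.mem_append, List.mem_singleton] at ht
    exact ht.elim (hw t) (· ▸ hqS)
  rw [Walk.length_concat] at this
  omega

lemma SimpleGraph.Walk.support_dropLast_subset {w : G.Walk a v} (hnil : ¬ w.Nil) :
    w.dropLast.support ⊆ w.support := by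
  rw [w.support_dropLast hnil]
  exact List.dropLast_subset _

lemma penultimate_mem_ballIn {w : G.Walk a v} (hw : ∀ q ∈ w.support, q ∈ S) (hnil : ¬ w.Nil) :
    w.penultimate ∈ ballIn G S a w.length :=
  ⟨w.dropLast, by rw [← w.length_dropLast_add_one hnil]; omega,
    fun q hq => hw q (Walk.support_dropLast_subset hnil hq)⟩

lemma exists_adj_adj_of_distIn_eq_add_one (h : distIn G S a v = r + 1) (hr : 0 < r) :
    ∃ z u, G.Adj z v ∧ G.Adj u z ∧ z ∈ ballIn G S a (r + 1) ∧ u ∈ ballIn G S a r := by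
  have h0 : distIn G S a v ≠ 0 := by omega
  obtain ⟨w, hwl, hw⟩ := exists_walk_length_eq_distIn h0
  have hnil : ¬ w.Nil := by rw [Walk.not_nil_iff_lt_length]; omega
  have hw'l : w.dropLast.length = r := by simp [hwl, h]
  have hnil' : ¬ w.dropLast.Nil := by rw [Walk.not_nil_iff_lt_length]; omega
  have hw' : ∀ q ∈ w.dropLast.support, q ∈ S :=
    fun q hq => hw q (Walk.support_dropLast_subset hnil hq)
  refine ⟨_, _, w.adj_penultimate hnil, w.dropLast.adj_penultimate hnil', ?_, ?_⟩
  · simpa [hwl, h] using penultimate_mem_ballIn hw hnil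
  · simpa [hw'l] using penultimate_mem_ballIn hw' hnil'

end distIn

def IsSphereChain (G : SimpleGraph V) (S : ℕ → Set V) (a : ℕ → V) (ρ : ℕ → ℕ) (σ : ℕ) : Prop :=
  ∀ i < σ, S (i + 1) ⊆ {v | v ∈ S i ∧ distIn G (S i) (a i) v = ρ i + 1}

namespace IsSphereChain

variable {S : ℕ → Set V} {a : ℕ → V} {ρ : ℕ → ℕ} {σ : ℕ}

lemma subset (hS : IsSphereChain G S a ρ σ) {i j : ℕ} (hij : i ≤ j) (hj : j ≤ σ) :
    S j ⊆ S i :=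
  antitoneOn_of_add_one_le Set.ordConnected_Iic
    (fun k _ _ hk _ hv => (hS k (Nat.lt_of_succ_le hk) hv).1)
    (Set.mem_Iic.2 (hij.trans hj)) (Set.mem_Iic.2 hj) hij

lemma distIn_eq (hS : IsSphereChain G S a ρ σ) {i : ℕ} (hi : i < σ) {v : V} (hv : v ∈ S σ) :
    distIn G (S i) (a i) v = ρ i + 1 :=
  (hS i hi (hS.subset hi le_rfl hv)).2

lemma apart_ballIn (hS : IsSphereChain G S a ρ σ) {i : ℕ} (hi : i < σ) :
    Apart G (ballIn G (S i) (a i) (ρ i)) (S (i + 1)) :=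
  _root_.apart_ballIn fun q hq => by
    obtain ⟨hqS, hqd⟩ := hS i hi hq
    exact ⟨hqS, by omega⟩

lemma not_mem_ballIn_of_adj (hS : IsSphereChain G S a ρ σ) {i j : ℕ} (hi : i < σ)
    (hj : j < σ) {z b : V} (hz : z ∈ ballIn G (S j) (a j) (ρ j + 1)) (hzb : G.Adj z b)
    (hb : b ∈ S σ) : z ∉ ballIn G (S i) (a i) (ρ i) := by
  intro hzi
  rcases lt_trichotomy j i with hji | rfl | hij
  · have := distIn_lt_of_mem_ballIn hz
    have := (hS j hj (hS.subset hji hi.le (ballIn_subset hzi))).2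
    omega
  · exact (hS.apart_ballIn hi z hzi b (hS.subset hi le_rfl hb)).2 hzb
  · exact (hS.apart_ballIn hi z hzi z (hS.subset hij hj.le (ballIn_subset hz))).1 rfl

theorem inducedMinor_completeBipartiteGraph (hS : IsSphereChain G S a ρ σ)
    (hcenter : ∀ i < σ, a i ∈ S i) (hρ : ∀ i < σ, 0 < ρ i) (x : V) (b : ℕ → V)
    (hbS : ∀ k < σ, b k ∈ S σ) (hbd : ∀ k < σ, G.dist x (b k) = 4 * k + 2) :
    InducedMinor (completeBipartiteGraph (Fin σ) (Fin σ)) G := by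
  have hzu : ∀ i < σ, ∀ k < σ, ∃ z u, G.Adj z (b k) ∧ G.Adj u z ∧
      z ∈ ballIn G (S i) (a i) (ρ i + 1) ∧ u ∈ ballIn G (S i) (a i) (ρ i) := fun i hi k hk =>
    exists_adj_adj_of_distIn_eq_add_one (hS.distIn_eq hi (hbS k hk)) (hρ i hi)
  have : Nonempty V := ⟨x⟩
  choose! z u hzb huz hz hu using hzu
  have hstar : ∀ k < σ, ∀ t ∈ (z · k) '' Set.Iio σ, G.Adj (b k) t := by
    rintro k hk _ ⟨j, hj, rfl⟩
    exact (hzb j hj k hk).symm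
  refine inducedMinor_completeBipartiteGraph_of_apart
    (fun i : Fin σ => ballIn G (S i) (a i) (ρ i))
    (fun k : Fin σ => insert (b k) ((z · k) '' Set.Iio σ))
    (fun i => connectedIn_ballIn (hcenter i i.2) (hρ i i.2))
    (fun k => connectedIn_insert_of_forall_adj (hstar k k.2))
    ((Std.Symm.pairwise_on _).2 fun i j hij =>
      (hS.apart_ballIn i.2).mono_right (ballIn_subset.trans (hS.subset hij j.2.le)))
    ((Std.Symm.pairwise_on _).2 fun k l hkl =>
      apart_insert_insert_of_dist (x := x) (hstar k k.2) (hstar l l.2) ?_)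
    (fun i k => Set.disjoint_right.2 ?_)
    (fun i k => ⟨u i k, hu i i.2 k k.2, z i k, .inr ⟨i, i.2, rfl⟩, huz i i.2 k k.2⟩)
  · have : (k : ℕ) < l := hkl
    rw [hbd k k.2, hbd l l.2]
    omega
  · rintro _ (rfl | ⟨j, hj, rfl⟩) hv
    · exact (hS.apart_ballIn i.2 _ hv _ (hS.subset i.2 le_rfl (hbS k k.2))).1 rfl
    · exact hS.not_mem_ballIn_of_adj i.2 hj (hz j hj k k.2) (hzb j hj k k.2) (hbS k k.2) hv

end IsSphereChain

theorem IsAbyss.inducedMinor_completeBipartiteGraph {X : Set V} {σ : ℕ} {a : ℕ → V}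
    (h : IsAbyss G X σ (4 * σ) a) : InducedMinor (completeBipartiteGraph (Fin σ) (Fin σ)) G := by
  obtain ⟨S, ρ, -, hS0, ha0, hstep, hdist⟩ := h
  have hS : IsSphereChain G S a ρ σ := fun i hi => (hstep i hi).1
  have hcenter : ∀ i < σ, a i ∈ S i := by
    rintro (_ | i) hi
    exacts [ha0 0 (Nat.zero_le _), (hstep i (by omega)).2.2 _ le_rfl (by omega)]
  obtain ⟨hconn, hx, hy⟩ : ConnectedIn G (S σ) ∧ a σ ∈ S σ ∧ a (σ + 1) ∈ S σ := by
    rcases σ with _ | n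
    · exact ⟨hS0, ha0 0 (by omega), ha0 1 le_rfl⟩
    · obtain ⟨-, hconn, hmem⟩ := hstep n n.lt_succ_self
      exact ⟨hconn, hmem _ le_rfl (by omega), hmem _ (by omega) le_rfl⟩
  have hρ : ∀ i < σ, 0 < ρ i := fun i hi => by
    have hx' := hS.distIn_eq hi hx
    have hy' := hS.distIn_eq hi hy
    have := dist_le_distIn_add_distIn (ne_of_eq_of_ne hx' (ρ i).succ_ne_zero)
      (ne_of_eq_of_ne hy' (ρ i).succ_ne_zero)
    omega
  obtain ⟨W, hW⟩ := hconn.2 _ hx _ hy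
  have hb : ∀ k < σ, ∃ b ∈ S σ, G.dist (a σ) b = 4 * k + 2 := fun k hk => by
    obtain ⟨b, hbW, hbd⟩ := W.exists_mem_support_dist_eq (a σ) (m := 4 * k + 2)
      (by rw [SimpleGraph.dist_self]; omega) (by omega)
    exact ⟨b, hW b hbW, hbd⟩
  have : Nonempty V := ⟨a 0⟩
  choose! b hbS hbd using hb
  exact hS.inducedMinor_completeBipartiteGraph hcenter hρ (a σ) b hbS hbd

theorem statement14_general {V : Type} (σ : ℕ)
    (G : SimpleGraph V)
    (hK : ¬ InducedMinor (completeBipartiteGraph (Fin σ) (Fin σ)) G)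
    (X : Set V) :
    ¬ ∃ a : ℕ → V, IsAbyss G X σ (4 * σ) a :=
  fun ⟨_, ha⟩ => hK ha.inducedMinor_completeBipartiteGraph

/-- If `G` has no induced minor isomorphic to `K_{σ,σ}`, then for every
`X ⊆ V(G)` there is no `(σ, 4σ)`-`X`-abyss in `G`. -/
theorem statement14 {V : Type} [Fintype V] (σ : ℕ) (hσ : 1 ≤ σ)
    (G : SimpleGraph V)
    (hK : ¬ InducedMinor (completeBipartiteGraph (Fin σ) (Fin σ)) G)
    (X : Set V) :
    ¬ ∃ a : ℕ → V, IsAbyss G X σ (4 * σ) a :=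
  statement14_general σ G hK X
end

section
/- Let H be a bipartite graph with a bipartition (A,B) such that every vertex in A has degree exactly two in H. Let G be a graph with an induced minor isomorphic to H. Then there is an induced H-model (X_v : v ∈ V(H)) in G such that |V(X_a)| = 1 for all a ∈ A. -/
/-! For `a ∈ A` with neighbours `c₁, c₂`, walk inside `X a` from a vertex seeing `X c₁` to one
seeing `X c₂`, and stop at the first vertex `t` that sees `X c₂`. The vertices passed before `t`
see neither `X c₂` nor, as `a` has no other neighbours, any branch set other than `X a` and
`X c₁`; so they can be handed over to `X c₁`, and `X a` shrinks to `{t}`. Only the branch sets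
of `a` and of `c₁ ∉ A` change, so this can be done for the vertices of `A` one at a time. -/

open SimpleGraph Function

variable {V : Type*} {G : SimpleGraph V}

namespace ConnectedIn

theorem singleton (v : V) : ConnectedIn G {v} :=
  ⟨Set.singleton_nonempty v, fun a ha b hb => by
    rw [Set.mem_singleton_iff] at ha hb
    subst ha hb
    exact ⟨Walk.nil, by simp⟩⟩

theorem of_subset_of_forall_walk {Z T : Set V} (hZ : ConnectedIn G Z) (hZT : Z ⊆ T)
    (h : ∀ c ∈ T, ∃ p ∈ Z, ∃ w : G.Walk c p, ∀ v ∈ w.support, v ∈ T) :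
    ConnectedIn G T := by
  refine ⟨hZ.1.mono hZT, fun a ha b hb => ?_⟩
  obtain ⟨p, hp, w₁, hw₁⟩ := h a ha
  obtain ⟨q, hq, w₂, hw₂⟩ := h b hb
  obtain ⟨w₃, hw₃⟩ := hZ.2 p hp q hq
  refine ⟨w₁.append (w₃.append w₂.reverse), fun v hv => ?_⟩
  simp only [Walk.mem_support_append_iff, Walk.support_reverse, List.mem_reverse] at hv
  rcases hv with hv | hv | hv
  exacts [hw₁ v hv, hZT (hw₃ v hv), hw₂ v hv]

theorem insert {Z : Set V} (hZ : ConnectedIn G Z) {u z : V} (hz : z ∈ Z) (huz : G.Adj u z) :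
    ConnectedIn G (insert u Z) := by
  refine hZ.of_subset_of_forall_walk (Set.subset_insert u Z) fun c hc => ?_
  rcases hc with rfl | hc
  · refine ⟨z, hz, Walk.cons huz Walk.nil, fun v hv => ?_⟩
    simp only [Walk.support_cons, Walk.support_nil, List.mem_cons, List.not_mem_nil,
      or_false] at hv
    rcases hv with rfl | rfl
    exacts [Set.mem_insert _ _, Set.mem_insert_of_mem _ hz]
  · exact ⟨c, hc, Walk.nil, by simp [hc]⟩

end ConnectedIn

theorem SimpleGraph.Walk.exists_first_adj {u v : V} (p : G.Walk u v) {Y Z : Set V}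
    (hZ : ConnectedIn G Z) (hu : ∃ z ∈ Z, G.Adj u z) (hv : ∃ y ∈ Y, G.Adj v y) :
    ∃ t ∈ p.support, ∃ S : Set V, S ⊆ {x | x ∈ p.support} ∧ (∃ y ∈ Y, G.Adj t y) ∧
      (∀ s ∈ S, ∀ y ∈ Y, ¬ G.Adj s y) ∧ ConnectedIn G (Z ∪ S) ∧ ∃ z ∈ Z ∪ S, G.Adj t z := by
  induction p generalizing Z with
  | nil =>
    exact ⟨_, List.mem_singleton_self _, ∅, Set.empty_subset _, hv, by simp,
      by simpa using hZ, by simpa using hu⟩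
  | @cons u u' v huu' p ih =>
    by_cases huY : ∃ y ∈ Y, G.Adj u y
    · exact ⟨u, Walk.start_mem_support _, ∅, Set.empty_subset _, huY, by simp,
        by simpa using hZ, by simpa using hu⟩
    push Not at huY
    obtain ⟨z, hz, huz⟩ := hu
    obtain ⟨t, ht, S, hS, htY, hSY, hconn, htS⟩ :=
      ih (hZ.insert hz huz) ⟨u, Set.mem_insert u Z, huu'.symm⟩ hv
    have hunion : insert u Z ∪ S = Z ∪ insert u S := by
      rw [Set.insert_union, Set.union_insert]
    refine ⟨t, List.mem_cons_of_mem u ht, insert u S, ?_, htY, ?_, hunion ▸ hconn,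
      hunion ▸ htS⟩
    · rintro s (rfl | hs)
      exacts [Walk.start_mem_support _, List.mem_cons_of_mem u (hS hs)]
    · rintro s (rfl | hs)
      exacts [huY, hSY s hs]

section TransferBranch

variable {W : Type*} [DecidableEq W]

def transferBranch (X : W → Set V) (a c : W) (t : V) (S : Set V) : W → Set V :=
  update (update X c (X c ∪ S)) a {t}

variable {X : W → Set V} {a c : W} {t : V} {S : Set V}

@[simp]
theorem transferBranch_self : transferBranch X a c t S a = {t} :=
  update_self ..

theorem transferBranch_target (hac : a ≠ c) : transferBranch X a c t S c = X c ∪ S := by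
  simp [transferBranch, hac.symm]

theorem transferBranch_of_ne {w : W} (hwa : w ≠ a) (hwc : w ≠ c) :
    transferBranch X a c t S w = X w := by
  simp [transferBranch, hwa, hwc]

theorem subset_transferBranch (hac : a ≠ c) {w : W} (hwa : w ≠ a) :
    X w ⊆ transferBranch X a c t S w := by
  by_cases hwc : w = c
  · subst hwc; rw [transferBranch_target hac]; exact Set.subset_union_left
  · rw [transferBranch_of_ne hwa hwc]

theorem mem_transferBranch (hac : a ≠ c) (ht : t ∈ X a) {w : W} {x : V}
    (hx : x ∈ transferBranch X a c t S w) : x ∈ X w ∨ (w = c ∧ x ∈ S) := by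
  by_cases hwa : w = a
  · subst hwa; rw [transferBranch_self] at hx; exact Or.inl (hx ▸ ht)
  by_cases hwc : w = c
  · subst hwc; rw [transferBranch_target hac] at hx; exact hx.imp_right fun h => ⟨rfl, h⟩
  · rw [transferBranch_of_ne hwa hwc] at hx; exact Or.inl hx

theorem pairwise_disjoint_transferBranch (hdisj : ∀ w w', w ≠ w' → Disjoint (X w) (X w'))
    (hac : a ≠ c) (ht : t ∈ X a) (hS : S ⊆ X a) (htS : t ∉ S) {w w' : W} (hww' : w ≠ w') :
    Disjoint (transferBranch X a c t S w) (transferBranch X a c t S w') := by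
  have hXa : ∀ w x, x ∈ X a → x ∈ X w → w = a := fun w x hxa hxw => by
    by_contra hwa
    exact Set.disjoint_left.mp (hdisj a w (Ne.symm hwa)) hxa hxw
  refine Set.disjoint_left.mpr fun x hx hx' => ?_
  rcases mem_transferBranch hac ht hx with hxw | ⟨hwc, hxS⟩ <;>
    rcases mem_transferBranch hac ht hx' with hxw' | ⟨hw'c, hxS'⟩
  · exact Set.disjoint_left.mp (hdisj w w' hww') hxw hxw'
  · obtain rfl := hXa w x (hS hxS') hxw
    rw [transferBranch_self] at hx
    exact htS (hx ▸ hxS')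
  · obtain rfl := hXa w' x (hS hxS) hxw'
    rw [transferBranch_self] at hx'
    exact htS (hx' ▸ hxS)
  · exact hww' (hwc.trans hw'c.symm)

end TransferBranch

section ModelTransfer

variable {W : Type*} [DecidableEq W] {H : SimpleGraph W} {X : W → Set V} {a c₁ c₂ : W} {t : V}
  {S : Set V}

theorem IsInducedModel.not_adj_transferBranch (hX : IsInducedModel H G X)
    (hN : ∀ w, H.Adj a w ↔ w = c₁ ∨ w = c₂) (ht : t ∈ X a) (hS : S ⊆ X a)
    (hSc₂ : ∀ s ∈ S, ∀ y ∈ X c₂, ¬ G.Adj s y) {w w' : W} (hww' : w ≠ w') (hH : ¬ H.Adj w w') :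
    ∀ x ∈ transferBranch X a c₁ t S w, ∀ y ∈ transferBranch X a c₁ t S w', ¬ G.Adj x y := by
  have hac₁ : a ≠ c₁ := H.ne_of_adj ((hN c₁).2 (Or.inl rfl))
  have hS_side : ∀ w, w ≠ c₁ → ¬ H.Adj w c₁ → ∀ x ∈ X w, ∀ s ∈ S, ¬ G.Adj x s := by
    intro w hwc hH x hx s hs hxs
    by_cases hwa : w = a
    · subst hwa; exact hH ((hN c₁).2 (Or.inl rfl))
    by_cases haw : H.Adj a w
    · rcases (hN w).1 haw with rfl | rfl
      exacts [hwc rfl, hSc₂ s hs x hx hxs.symm]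
    · exact hX.2.2.2 a w (Ne.symm hwa) haw s (hS hs) x hx hxs.symm
  intro x hx y hy hxy
  rcases mem_transferBranch hac₁ ht hx with hxw | ⟨rfl, hxS⟩ <;>
    rcases mem_transferBranch hac₁ ht hy with hyw | ⟨rfl, hyS⟩
  · exact hX.2.2.2 w w' hww' hH x hxw y hyw hxy
  · exact hS_side w hww' hH x hxw y hyS hxy
  · exact hS_side w' hww'.symm (fun h => hH h.symm) y hyw x hxS hxy.symm
  · exact hww' rfl

theorem isInducedModel_transferBranch (hX : IsInducedModel H G X)
    (hN : ∀ w, H.Adj a w ↔ w = c₁ ∨ w = c₂) (ht : t ∈ X a) (hS : S ⊆ X a)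
    (htc₂ : ∃ y ∈ X c₂, G.Adj t y)
    (hSc₂ : ∀ s ∈ S, ∀ y ∈ X c₂, ¬ G.Adj s y) (hconn : ConnectedIn G (X c₁ ∪ S))
    (htc₁ : ∃ z ∈ X c₁ ∪ S, G.Adj t z) :
    IsInducedModel H G (transferBranch X a c₁ t S) := by
  have hac₁ : a ≠ c₁ := H.ne_of_adj ((hN c₁).2 (Or.inl rfl))
  have htS : t ∉ S := fun h => by
    obtain ⟨y, hy, hty⟩ := htc₂
    exact hSc₂ t h y hy hty
  have hseen : ∀ w, H.Adj a w → ∃ y ∈ transferBranch X a c₁ t S w, G.Adj t y := by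
    intro w hw
    rcases (hN w).1 hw with rfl | rfl
    · rwa [transferBranch_target hac₁]
    · obtain ⟨y, hy, hty⟩ := htc₂
      exact ⟨y, subset_transferBranch hac₁ (H.ne_of_adj hw).symm hy, hty⟩
  refine ⟨fun w => ?_, fun w w' => pairwise_disjoint_transferBranch hX.2.1 hac₁ ht hS htS,
    fun w w' hww' => ?_, fun w w' => hX.not_adj_transferBranch hN ht hS hSc₂⟩
  · by_cases hwa : w = a
    · subst hwa; rw [transferBranch_self]; exact ConnectedIn.singleton t
    by_cases hwc : w = c₁
    · subst hwc; rwa [transferBranch_target hac₁]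
    · rw [transferBranch_of_ne hwa hwc]; exact hX.1 w
  · by_cases hwa : w = a
    · subst hwa; exact ⟨t, by simp, hseen w' hww'⟩
    by_cases hw'a : w' = a
    · subst hw'a
      obtain ⟨y, hy, hty⟩ := hseen w hww'.symm
      exact ⟨y, hy, t, by simp, hty.symm⟩
    obtain ⟨x, hx, y, hy, hxy⟩ := hX.2.2.1 w w' hww'
    exact ⟨x, subset_transferBranch hac₁ hwa hx, y, subset_transferBranch hac₁ hw'a hy, hxy⟩

end ModelTransfer

theorem IsInducedModel.exists_singleton_of_adj_iff {W : Type*} {H : SimpleGraph W}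
    {X : W → Set V} (hX : IsInducedModel H G X) {a c₁ c₂ : W}
    (hN : ∀ w, H.Adj a w ↔ w = c₁ ∨ w = c₂) :
    ∃ X', IsInducedModel H G X' ∧ (X' a).ncard = 1 ∧ ∀ w, w ≠ a → w ≠ c₁ → X' w = X w := by
  classical
  obtain ⟨u, hu, z, hz, huz⟩ := hX.2.2.1 a c₁ ((hN c₁).2 (Or.inl rfl))
  obtain ⟨v, hv, y, hy, hvy⟩ := hX.2.2.1 a c₂ ((hN c₂).2 (Or.inr rfl))
  obtain ⟨p, hp⟩ := (hX.1 a).2 u hu v hv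
  obtain ⟨t, ht, S, hS, htc₂, hSc₂, hconn, htc₁⟩ :=
    p.exists_first_adj (hX.1 c₁) ⟨z, hz, huz⟩ ⟨y, hy, hvy⟩
  exact ⟨_, isInducedModel_transferBranch hX hN (hp t ht) (fun s hs => hp s (hS hs)) htc₂ hSc₂
    hconn htc₁, by simp, fun w hwa hwc => transferBranch_of_ne hwa hwc⟩

theorem statement16_general {W V : Type} [Fintype W] (H : SimpleGraph W)
    (A : Set W)
    (hAstable : ∀ a ∈ A, ∀ a' ∈ A, ¬ H.Adj a a')
    (hdeg : ∀ a ∈ A, ({w : W | H.Adj a w}).ncard = 2)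
    (G : SimpleGraph V) (hm : InducedMinor H G) :
    ∃ X : W → Set V, IsInducedModel H G X ∧ ∀ a ∈ A, (X a).ncard = 1 := by
  suffices ∀ T ⊆ A, ∃ X : W → Set V, IsInducedModel H G X ∧ ∀ a ∈ T, (X a).ncard = 1 from
    this A subset_rfl
  intro T hTA
  induction T, A.toFinite.subset hTA using Set.Finite.induction_on with
  | empty =>
    obtain ⟨X, hX⟩ := hm
    exact ⟨X, hX, by simp⟩
  | @insert a T haT _ ih =>
    have haA : a ∈ A := hTA (Set.mem_insert a T)
    obtain ⟨X, hX, hXT⟩ := ih ((Set.subset_insert a T).trans hTA)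
    obtain ⟨c₁, c₂, -, hN⟩ := Set.ncard_eq_two.mp (hdeg a haA)
    have hN' : ∀ w, H.Adj a w ↔ w = c₁ ∨ w = c₂ := fun w => Set.ext_iff.mp hN w
    have hc₁A : c₁ ∉ A := fun h => hAstable a haA c₁ h ((hN' c₁).2 (Or.inl rfl))
    obtain ⟨X', hX', hX'a, hX'X⟩ := hX.exists_singleton_of_adj_iff hN'
    refine ⟨X', hX', ?_⟩
    rintro b (rfl | hbT)
    · exact hX'a
    · rw [hX'X b (ne_of_mem_of_not_mem hbT haT) (ne_of_mem_of_not_mem (hTA (Or.inr hbT)) hc₁A)]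
      exact hXT b hbT

/-- If `H` is bipartite with bipartition `(A, B)` in which every vertex of
`A` has degree exactly two, and `G` has an induced minor isomorphic to `H`, then there
is an induced `H`-model in `G` whose branch sets over `A` are singletons. -/
theorem statement16 {W V : Type} [Fintype W] [Fintype V] (H : SimpleGraph W)
    (A B : Set W)
    (hcover : ∀ w : W, w ∈ A ∨ w ∈ B) (hdisj : ∀ w : W, ¬ (w ∈ A ∧ w ∈ B))
    (hAstable : ∀ a ∈ A, ∀ a' ∈ A, ¬ H.Adj a a')
    (hBstable : ∀ b ∈ B, ∀ b' ∈ B, ¬ H.Adj b b')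
    (hdeg : ∀ a ∈ A, ({w : W | H.Adj a w}).ncard = 2)
    (G : SimpleGraph V) (hm : InducedMinor H G) :
    ∃ X : W → Set V, IsInducedModel H G X ∧ ∀ a ∈ A, (X a).ncard = 1 :=
  statement16_general H A hAstable hdeg G hm
end

section
/- Let α,s,t ∈ ℕ⁺. Every graph G that has no induced subgraph isomorphic to K_{s,s}, has no clique of cardinality t, and has at least α^s·t^{s−1} vertices contains a stable set of cardinality α. -/
/-!
Let `M` be a maximum stable set and suppose `|M| < α`. By maximality every vertex `v ∉ M` has a
neighbour in `M`; let `κ(v)` be its neighbourhood in `M`, cut down to `s` vertices when larger.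
There are fewer than `(|M| + 1)^s ≤ α^s` possible values of `κ`. If `|κ(v)| = s`, the fibre of
`κ(v)` lies in the common neighbourhood of a stable `s`-set, so a stable `s`-set inside it would
induce `K_{s,s}`. If `|κ(v)| < s`, every vertex of the fibre has neighbourhood exactly `T = κ(v)`
in `M`, so a stable set `I` in the fibre can replace `T` in `M`, whence `|I| ≤ |T| < s`. Since
`G` has no `t`-clique either, the Ramsey bound `R(s, t) ≤ t^(s-1)` caps every fibre
below `t^(s-1)`, and so `|V| < α^s t^(s-1)`.
-/

open Finset

theorem Nat.sum_range_choose_le_add_one_pow (m s : ℕ) :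
    ∑ i ∈ range (s + 1), m.choose i ≤ (m + 1) ^ s := by
  rw [add_pow]
  refine sum_le_sum fun i hi => ?_
  rw [one_pow, mul_one]
  exact (Nat.choose_le_pow m i).trans
    (Nat.le_mul_of_pos_right _ (Nat.choose_pos (Nat.lt_succ_iff.1 (mem_range.1 hi))))

theorem Finset.card_filter_powerset_le_add_one_pow {α : Type*} (M : Finset α) (s : ℕ) :
    #{T ∈ M.powerset | #T ≤ s} ≤ (#M + 1) ^ s := by
  classical
  calc #{T ∈ M.powerset | #T ≤ s} ≤ #((range (s + 1)).biUnion M.powersetCard) :=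
        card_le_card fun T hT => by
          simp only [mem_filter, mem_powerset] at hT
          exact mem_biUnion.2 ⟨#T, mem_range.2 (Nat.lt_succ_of_le hT.2),
            mem_powersetCard.2 ⟨hT.1, rfl⟩⟩
    _ ≤ ∑ i ∈ range (s + 1), (#M).choose i :=
        card_biUnion_le.trans_eq (sum_congr rfl fun i _ => card_powersetCard i M)
    _ ≤ (#M + 1) ^ s := Nat.sum_range_choose_le_add_one_pow _ _

namespace SimpleGraph

variable {V : Type*} {G : SimpleGraph V}

theorem indepSetFreeOn_iff_cliqueFreeOn_compl {s : Set V} {n : ℕ} :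
    G.IndepSetFreeOn s n ↔ Gᶜ.CliqueFreeOn s n := by
  simp [IndepSetFreeOn, CliqueFreeOn]

theorem IndepSetFreeOn.subset {s₁ s₂ : Set V} {n : ℕ} (hs : s₁ ⊆ s₂)
    (h : G.IndepSetFreeOn s₂ n) : G.IndepSetFreeOn s₁ n :=
  fun _ hts => h (hts.trans hs)

theorem IndepSetFreeOn.of_succ {s : Set V} {n : ℕ} {a : V} (h : G.IndepSetFreeOn s (n + 1))
    (ha : a ∈ s) : G.IndepSetFreeOn (s ∩ Gᶜ.neighborSet a) n :=
  indepSetFreeOn_iff_cliqueFreeOn_compl.2 ((indepSetFreeOn_iff_cliqueFreeOn_compl.1 h).of_succ _ ha)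

theorem nonempty_completeBipartiteGraph_embedding {α β : Type*} [Fintype α] [Fintype β]
    {A B : Finset V} (hA : G.IsNIndepSet (Fintype.card α) A)
    (hB : G.IsNIndepSet (Fintype.card β) B) (hAB : ∀ a ∈ A, ∀ b ∈ B, G.Adj a b) :
    Nonempty (completeBipartiteGraph α β ↪g G) := by
  obtain ⟨eA⟩ : Nonempty (α ≃ A) := Fintype.card_eq.1 (by simp [hA.card_eq])
  obtain ⟨eB⟩ : Nonempty (β ≃ B) := Fintype.card_eq.1 (by simp [hB.card_eq])
  have not_adj {S : Finset V} (hS : G.IsIndepSet S) (x y : S) : ¬G.Adj x y := fun h =>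
    hS x.2 y.2 h.ne h
  refine ⟨⟨⟨Sum.elim (fun i => (eA i : V)) (fun j => (eB j : V)), ?_⟩, ?_⟩⟩
  · exact (Subtype.val_injective.comp eA.injective).sumElim
      (Subtype.val_injective.comp eB.injective) fun i j => (hAB _ (eA i).2 _ (eB j).2).ne
  · rintro (i | i) (j | j)
    · simpa using not_adj hA.isIndepSet (eA i) (eA j)
    · simpa using hAB _ (eA i).2 _ (eB j).2
    · simpa using (hAB _ (eA j).2 _ (eB i).2).symm
    · simpa using not_adj hB.isIndepSet (eB i) (eB j)

theorem indepSetFreeOn_of_forall_adj {s : ℕ} {T : Finset V} {F : Set V}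
    (hKss : IsEmpty (completeBipartiteGraph (Fin s) (Fin s) ↪g G))
    (hT : G.IsNIndepSet s T) (hF : ∀ v ∈ F, ∀ x ∈ T, G.Adj v x) :
    G.IndepSetFreeOn F s := fun I hIF hI =>
  hKss.false (nonempty_completeBipartiteGraph_embedding (A := T) (B := I)
    (by rwa [Fintype.card_fin]) (by rwa [Fintype.card_fin])
    fun x hx v hv => (hF v (hIF hv) x hx).symm).some

variable [DecidableEq V]

theorem IsMaximumIndepSet.card_le_of_forall_adj_mem [Finite V] {M T I : Finset V}
    (hM : G.IsMaximumIndepSet M) (hTM : T ⊆ M) (hI : G.IsIndepSet I) (hIM : Disjoint I M)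
    (hIT : ∀ v ∈ I, ∀ x ∈ M, G.Adj v x → x ∈ T) : #I ≤ #T := by
  have hunion : G.IsIndepSet ↑(I ∪ (M \ T)) := by
    rw [coe_union, isIndepSet_iff, Set.pairwise_union]
    refine ⟨hI, hM.isIndepSet.mono (by simp), fun v hv x hx _ => ?_⟩
    have hxT : x ∉ T := (mem_sdiff.1 hx).2
    exact ⟨fun h => hxT (hIT v hv x (mem_sdiff.1 hx).1 h),
      fun h => hxT (hIT v hv x (mem_sdiff.1 hx).1 h.symm)⟩
  have hmax := hM.maximum _ hunion
  rw [card_union_of_disjoint (hIM.mono_right sdiff_subset), card_sdiff_of_subset hTM] at hmax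
  have := card_le_card hTM
  omega

variable [DecidableRel G.Adj]

theorem card_lt_pow_of_cliqueFreeOn_of_indepSetFreeOn {k t : ℕ} {A : Finset V}
    (hC : G.CliqueFreeOn A t) (hI : G.IndepSetFreeOn A (k + 1)) : #A < t ^ k := by
  induction k generalizing t A with
  | zero =>
    rw [pow_zero, Nat.lt_one_iff, card_eq_zero, ← not_nonempty_iff_eq_empty]
    rintro ⟨a, ha⟩
    exact hI (by simpa using ha) ⟨by simp, card_singleton a⟩
  | succ k ihk =>
    induction t generalizing A with
    | zero => exact absurd (hC (t := ∅) (by simp)) (by simp)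
    | succ t iht =>
      obtain rfl | ⟨a, ha⟩ := A.eq_empty_or_nonempty
      · simp
      have hadj : #{x ∈ A | G.Adj a x} < t ^ (k + 1) :=
        iht (CliqueFreeOn.subset _ (by intro x; simp) (hC.of_succ _ ha))
          (hI.subset (by intro x; simp +contextual))
      have hnonadj : #{x ∈ A | Gᶜ.Adj a x} < (t + 1) ^ k :=
        ihk (CliqueFreeOn.subset _ (by intro x; simp +contextual) hC)
          ((hI.of_succ ha).subset (by intro x; simp))
      have hcover : A ⊆ insert a ({x ∈ A | G.Adj a x} ∪ {x ∈ A | Gᶜ.Adj a x}) := by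
        intro x hx
        by_cases hax : a = x
        · simp [hax]
        · by_cases h : G.Adj a x <;> simp [hx, h, hax]
      have hpow : t ^ (k + 1) ≤ t * (t + 1) ^ k := by
        rw [pow_succ']
        exact Nat.mul_le_mul_left _ (Nat.pow_le_pow_left (Nat.le_succ t) k)
      calc #A ≤ #{x ∈ A | G.Adj a x} + #{x ∈ A | Gᶜ.Adj a x} + 1 :=
            (card_le_card hcover).trans ((card_insert_le _ _).trans
              (Nat.succ_le_succ (card_union_le _ _)))
        _ < (t + 1) ^ (k + 1) := by rw [pow_succ]; nlinarith

theorem IsMaximumIndepSet.card_lt_pow_of_forall_adj_mem [Finite V] {M T F : Finset V} {t : ℕ}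
    (hM : G.IsMaximumIndepSet M) (hfree : G.CliqueFree t) (hTM : T ⊆ M) (hFM : Disjoint F M)
    (hFT : ∀ v ∈ F, ∀ x ∈ M, G.Adj v x → x ∈ T) : #F < t ^ #T :=
  card_lt_pow_of_cliqueFreeOn_of_indepSetFreeOn hfree.cliqueFreeOn fun I hIF hI =>
    (hM.card_le_of_forall_adj_mem hTM hI.isIndepSet (hFM.mono_left hIF)
      fun v hv => hFT v (hIF hv)).not_gt (by rw [hI.card_eq]; omega)

theorem IsMaximumIndepSet.exists_adj_of_notMem [Finite V] {M : Finset V}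
    (hM : G.IsMaximumIndepSet M) {v : V} (hv : v ∉ M) : ∃ x ∈ M, G.Adj v x := by
  by_contra! h
  simpa using hM.card_le_of_forall_adj_mem (empty_subset M) (I := {v}) (by simp)
    (disjoint_singleton_left.2 hv) fun w hw x hx hadj =>
      absurd (mem_singleton.1 hw ▸ hadj) (h x hx)

theorem IsMaximumIndepSet.card_lt_pow_of_forall_subset_card_eq_min [Finite V]
    {M T F : Finset V} {k t : ℕ} (hM : G.IsMaximumIndepSet M)
    (hKss : IsEmpty (completeBipartiteGraph (Fin (k + 1)) (Fin (k + 1)) ↪g G))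
    (hfree : G.CliqueFree t) (ht : 1 ≤ t) (hTM : T ⊆ M) (hFM : Disjoint F M)
    (hF : ∀ v ∈ F, T ⊆ {x ∈ M | G.Adj v x} ∧ #T = min (k + 1) #{x ∈ M | G.Adj v x}) :
    #F < t ^ k := by
  obtain rfl | ⟨v₀, hv₀⟩ := F.eq_empty_or_nonempty
  · simpa using Nat.pow_pos (n := k) ht
  by_cases hsmall : #T < k + 1
  · refine (hM.card_lt_pow_of_forall_adj_mem hfree hTM hFM fun v hv x hx hadj => ?_).trans_le
      (Nat.pow_le_pow_right ht (by omega))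
    obtain ⟨hTN, hTcard⟩ := hF v hv
    rw [eq_of_subset_of_card_le hTN (by omega)]
    exact mem_filter.2 ⟨hx, hadj⟩
  · have hT : G.IsNIndepSet (k + 1) T :=
      ⟨hM.isIndepSet.mono (coe_subset.2 hTM), by have := (hF v₀ hv₀).2; omega⟩
    exact card_lt_pow_of_cliqueFreeOn_of_indepSetFreeOn hfree.cliqueFreeOn
      (indepSetFreeOn_of_forall_adj hKss hT fun v hv x hx => (mem_filter.1 ((hF v hv).1 hx)).2)

theorem IsMaximumIndepSet.card_lt_pow_mul_pow [Fintype V] {M : Finset V} {k t : ℕ}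
    (hM : G.IsMaximumIndepSet M)
    (hKss : IsEmpty (completeBipartiteGraph (Fin (k + 1)) (Fin (k + 1)) ↪g G))
    (hfree : G.CliqueFree t) (ht : 1 ≤ t) :
    Fintype.card V < (#M + 1) ^ (k + 1) * t ^ k := by
  choose key hkeyN hkey_card using
    fun v => exists_subset_card_eq (min_le_right (k + 1) #{x ∈ M | G.Adj v x})
  have hkeys : (univ \ M).image key ⊆ {T ∈ M.powerset | #T ≤ k + 1}.erase ∅ := by
    intro T hT
    obtain ⟨v, hv, rfl⟩ := mem_image.1 hT
    obtain ⟨x, hxM, hvx⟩ := hM.exists_adj_of_notMem (mem_sdiff.1 hv).2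
    have hpos : 0 < #(key v) := by
      rw [hkey_card]; exact lt_min k.succ_pos (card_pos.2 ⟨x, mem_filter.2 ⟨hxM, hvx⟩⟩)
    refine mem_erase.2 ⟨(card_pos.1 hpos).ne_empty, mem_filter.2 ⟨?_, ?_⟩⟩
    · exact mem_powerset.2 ((hkeyN v).trans (filter_subset _ _))
    · rw [hkey_card]; exact min_le_left _ _
  have hfiber (T) (hT : T ∈ (univ \ M).image key) : #{v ∈ univ \ M | key v = T} < t ^ k := by
    obtain ⟨v, -, rfl⟩ := mem_image.1 hT
    refine hM.card_lt_pow_of_forall_subset_card_eq_min hKss hfree ht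
      ((hkeyN v).trans (filter_subset _ _))
      (Finset.disjoint_left.2 fun w hw => (mem_sdiff.1 (mem_filter.1 hw).1).2) fun w hw => ?_
    rw [← (mem_filter.1 hw).2]
    exact ⟨hkeyN w, hkey_card w⟩
  have hkeys_card : #((univ \ M).image key) ≤ (#M + 1) ^ (k + 1) - 1 := by
    refine (card_le_card hkeys).trans ?_
    rw [card_erase_of_mem (by simp)]
    exact Nat.sub_le_sub_right (card_filter_powerset_le_add_one_pow M (k + 1)) 1
  have hout : #(univ \ M) ≤ (t ^ k - 1) * ((#M + 1) ^ (k + 1) - 1) :=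
    (card_le_mul_card_image _ _ fun T hT => Nat.le_sub_one_of_lt (hfiber T hT)).trans
      (Nat.mul_le_mul_left _ hkeys_card)
  have hcard : Fintype.card V = #M + #(univ \ M) := by
    rw [card_univ_sdiff]; have := card_le_univ M; omega
  have hP : #M + 1 ≤ (#M + 1) ^ (k + 1) := Nat.le_self_pow k.add_one_ne_zero _
  have hQ : 1 ≤ t ^ k := Nat.one_le_pow _ _ ht
  zify [hQ, hP.trans' (Nat.le_add_left 1 _)] at hout hcard
  nlinarith

end SimpleGraph

theorem statement19_general {V : Type} [Fintype V] (α s t : ℕ) (hs : 1 ≤ s)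
    (ht : 1 ≤ t) (G : SimpleGraph V)
    (hKss : IsEmpty (completeBipartiteGraph (Fin s) (Fin s) ↪g G))
    (hfree : G.CliqueFree t)
    (hcard : α ^ s * t ^ (s - 1) ≤ Fintype.card V) :
    ∃ S : Finset V, S.card = α ∧ ∀ x ∈ S, ∀ y ∈ S, x ≠ y → ¬ G.Adj x y := by
  classical
  obtain ⟨k, rfl⟩ : ∃ k, s = k + 1 := ⟨s - 1, by omega⟩
  obtain ⟨M, hM⟩ := G.maximumIndepSet_exists
  by_cases hαM : α ≤ #M
  · obtain ⟨S, hSM, hS⟩ := exists_subset_card_eq hαM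
    exact ⟨S, hS, fun x hx y hy hxy => hM.isIndepSet (hSM hx) (hSM hy) hxy⟩
  · have hsmall := hM.card_lt_pow_mul_pow hKss hfree ht
    have hpow : (#M + 1) ^ (k + 1) ≤ α ^ (k + 1) := Nat.pow_le_pow_left (by omega) _
    rw [Nat.add_sub_cancel] at hcard
    exact absurd (hsmall.trans_le (Nat.mul_le_mul_right _ hpow)) hcard.not_gt

/-- Every `K_{s,s}`-free (as induced subgraph) and `K_t`-free graph on at
least `α^s · t^{s−1}` vertices has a stable set of cardinality `α`. -/
theorem statement19 {V : Type} [Fintype V] (α s t : ℕ) (hα : 1 ≤ α) (hs : 1 ≤ s)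
    (ht : 1 ≤ t) (G : SimpleGraph V)
    (hKss : IsEmpty (completeBipartiteGraph (Fin s) (Fin s) ↪g G))
    (hfree : G.CliqueFree t)
    (hcard : α ^ s * t ^ (s - 1) ≤ Fintype.card V) :
    ∃ S : Finset V, S.card = α ∧ ∀ x ∈ S, ∀ y ∈ S, x ≠ y → ¬ G.Adj x y :=
  statement19_general α s t hs ht G hKss hfree hcard
end
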